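/- Let S be a hyperbolic lattice of rank 3 with square-free determinant, and let r₁, r₂ be primitive roots with 4(r₁,r₂)² / (r₁² r₂²) = 2. Then, up to exchanging r₁ and r₂ and replacing r₁ by −r₁, one has r₁² = −1, r₂² = −2, and (r₁,r₂) = 1. -/

import Mathlib

/-- The bilinear form on `ℤ³` given by a Gram matrix `G`. -/
def gram (G : Matrix (Fin 3) (Fin 3) ℤ) (x y : Fin 3 → ℤ) : ℤ :=
  dotProduct x (G.mulVec y)

/-- `G` is the Gram matrix of a hyperbolic lattice of rank 3: it is symmetric and,
over `ℝ`, congruent to `diag (1, -1, -1)`, i.e. of signature `(1,2)`. -/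
def IsHyperbolicRank3 (G : Matrix (Fin 3) (Fin 3) ℤ) : Prop :=
  G.IsSymm ∧ ∃ P : Matrix (Fin 3) (Fin 3) ℝ, IsUnit P.det ∧
    P.transpose * (G.map (Int.cast : ℤ → ℝ)) * P = Matrix.diagonal ![1, -1, -1]

/-- `r` is a root of the lattice with Gram matrix `G`: `r² < 0` and `r² ∣ 2(r,x)`
for all lattice vectors `x` (so the reflection in `r` preserves the lattice). -/
def IsRootOf (G : Matrix (Fin 3) (Fin 3) ℤ) (r : Fin 3 → ℤ) : Prop :=
  gram G r r < 0 ∧ ∀ x : Fin 3 → ℤ, gram G r r ∣ 2 * gram G r x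

/-- `r` is a primitive lattice vector: it is not a nontrivial integer multiple of
another lattice vector. -/
def IsPrimitiveVec (r : Fin 3 → ℤ) : Prop :=
  r ≠ 0 ∧ ∀ (n : ℤ) (v : Fin 3 → ℤ), r = n • v → IsUnit n

lemma gram_comm (G : Matrix (Fin 3) (Fin 3) ℤ) (hG : G.IsSymm) (x y : Fin 3 → ℤ) :
    gram G x y = gram G y x := by
  have e01 := hG.apply 0 1
  have e02 := hG.apply 0 2
  have e12 := hG.apply 1 2
  simp only [gram, Matrix.mulVec, dotProduct, Fin.sum_univ_three]
  linear_combination (x 1 * y 0 - x 0 * y 1) * e01 + (x 2 * y 0 - x 0 * y 2) * e02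
    + (x 2 * y 1 - x 1 * y 2) * e12

lemma gram_lin (G : Matrix (Fin 3) (Fin 3) ℤ) (x y z : Fin 3 → ℤ) (s t : ℤ) :
    gram G x (fun i => s * y i + t * z i) = s * gram G x y + t * gram G x z := by
  simp only [gram, Matrix.mulVec, dotProduct, Fin.sum_univ_three]
  ring

/-- det of the Gram matrix of three vectors. -/
lemma gram_det (G : Matrix (Fin 3) (Fin 3) ℤ) (v : Fin 3 → (Fin 3 → ℤ)) :
    (Matrix.of fun i j => gram G (v i) (v j)).det
      = (Matrix.of fun i j => v j i).det ^ 2 * G.det := by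
  have h : (Matrix.of fun i j => gram G (v i) (v j))
      = (Matrix.of fun i j => v j i).transpose * G * (Matrix.of fun i j => v j i) := by
    ext i j
    simp [gram, Matrix.mul_apply, Matrix.mulVec, dotProduct, Fin.sum_univ_three,
      Matrix.transpose_apply]
    ring
  rw [h, Matrix.det_mul, Matrix.det_mul, Matrix.det_transpose]
  ring

lemma pp_dvd_of_sq (p d g : ℤ) (hp : Prime p) (hd : ¬ p ∣ d) (h : p^2 ∣ d^2 * g) :
    p ^ 2 ∣ g :=
  Prime.pow_dvd_of_dvd_mul_left hp 2 (fun hc => hd (hp.dvd_of_dvd_pow hc)) h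

lemma L1core (G : Matrix (Fin 3) (Fin 3) ℤ) (hG : G.IsSymm) (p : ℤ) (hp : Prime p)
    (r₁ r₂ w : Fin 3 → ℤ)
    (h1 : ∀ x, p ∣ gram G r₁ x) (h2 : ∀ x, p ∣ gram G r₂ x)
    (hodd : ¬ p ∣ (Matrix.of fun i j => (![r₁, r₂, w] : Fin 3 → Fin 3 → ℤ) j i).det) :
    p ^ 2 ∣ G.det := by
  set v : Fin 3 → (Fin 3 → ℤ) := ![r₁, r₂, w] with hv
  set N : Matrix (Fin 3) (Fin 3) ℤ := Matrix.of fun i j => gram G (v i) (v j) with hN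
  have hcol0 : ∀ i, p ∣ N i 0 := by
    intro i
    have : N i 0 = gram G r₁ (v i) := by
      simp only [hN, Matrix.of_apply, hv]
      exact gram_comm G hG _ _
    rw [this]; exact h1 _
  have hcol1 : ∀ i, p ∣ N i 1 := by
    intro i
    have : N i 1 = gram G r₂ (v i) := by
      simp only [hN, Matrix.of_apply, hv]
      exact gram_comm G hG _ _
    rw [this]; exact h2 _
  have hNdet : p ^ 2 ∣ N.det := by
    obtain ⟨s0, hs0⟩ := hcol0 0
    obtain ⟨s1, hs1⟩ := hcol0 1
    obtain ⟨s2, hs2⟩ := hcol0 2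
    obtain ⟨t0, ht0⟩ := hcol1 0
    obtain ⟨t1, ht1⟩ := hcol1 1
    obtain ⟨t2, ht2⟩ := hcol1 2
    rw [Matrix.det_fin_three, hs0, hs1, hs2, ht0, ht1, ht2]
    exact ⟨s0*t1*N 2 2 - s0*(N 1 2)*t2 - t0*s1*N 2 2 + t0*(N 1 2)*s2
      + N 0 2*s1*t2 - N 0 2*t1*s2, by ring⟩
  rw [gram_det G v] at hNdet
  exact pp_dvd_of_sq p _ _ hp hodd hNdet

lemma L2core (G : Matrix (Fin 3) (Fin 3) ℤ) (hG : G.IsSymm)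
    (u w₁ w₂ : Fin 3 → ℤ)
    (h2 : ∀ x, (2:ℤ) ∣ gram G u x) (h4 : (4:ℤ) ∣ gram G u u)
    (hodd : ¬ (2:ℤ) ∣ (Matrix.of fun i j => (![u, w₁, w₂] : Fin 3 → Fin 3 → ℤ) j i).det) :
    (4:ℤ) ∣ G.det := by
  set v : Fin 3 → (Fin 3 → ℤ) := ![u, w₁, w₂] with hv
  set N : Matrix (Fin 3) (Fin 3) ℤ := Matrix.of fun i j => gram G (v i) (v j) with hN
  have hcol0 : ∀ i, (2:ℤ) ∣ N i 0 := by
    intro i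
    have : N i 0 = gram G u (v i) := by
      simp only [hN, Matrix.of_apply, hv]
      exact gram_comm G hG _ _
    rw [this]; exact h2 _
  have hrow0 : ∀ j, (2:ℤ) ∣ N 0 j := fun j => h2 (v j)
  have h00 : (4:ℤ) ∣ N 0 0 := h4
  have hNdet : (4:ℤ) ∣ N.det := by
    obtain ⟨s, hs⟩ := h00
    obtain ⟨s1, hs1⟩ := hcol0 1
    obtain ⟨s2, hs2⟩ := hcol0 2
    obtain ⟨t1, ht1⟩ := hrow0 1
    obtain ⟨t2, ht2⟩ := hrow0 2
    rw [Matrix.det_fin_three, hs, hs1, hs2, ht1, ht2]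
    exact ⟨s*N 1 1*N 2 2 - s*N 1 2*N 2 1 - t1*s1*N 2 2 + t1*N 1 2*s2
      + t2*s1*N 2 1 - t2*N 1 1*s2, by ring⟩
  rw [gram_det G v] at hNdet
  have : (2:ℤ)^2 ∣ _ := pp_dvd_of_sq 2 _ _ Int.prime_two hodd (by norm_num at hNdet ⊢; exact hNdet)
  norm_num at this; exact this

lemma L1 (G : Matrix (Fin 3) (Fin 3) ℤ) (hG : G.IsSymm) (p : ℤ) (hp : Prime p)
    (r₁ r₂ : Fin 3 → ℤ)
    (h1 : ∀ x, p ∣ gram G r₁ x) (h2 : ∀ x, p ∣ gram G r₂ x)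
    (hind : ∀ l m : ℤ, (∀ i, p ∣ l * r₁ i + m * r₂ i) → p ∣ l ∧ p ∣ m) :
    p ^ 2 ∣ G.det := by
  have hcr : ¬ (p ∣ r₁ 1 * r₂ 2 - r₁ 2 * r₂ 1 ∧ p ∣ r₁ 2 * r₂ 0 - r₁ 0 * r₂ 2
      ∧ p ∣ r₁ 0 * r₂ 1 - r₁ 1 * r₂ 0) := by
    rintro ⟨⟨w0, hw0⟩, ⟨w1, hw1⟩, ⟨w2, hw2⟩⟩
    have key : ∀ t : Fin 3, p ∣ r₁ t := by
      intro t
      have h := hind (r₂ t) (-(r₁ t)) ?_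
      · exact (dvd_neg).mp h.2
      · intro i
        fin_cases t <;> fin_cases i
        · show p ∣ r₂ 0 * r₁ 0 + -(r₁ 0) * r₂ 0; exact ⟨0, by ring⟩
        · show p ∣ r₂ 0 * r₁ 1 + -(r₁ 0) * r₂ 1; exact ⟨-w2, by linear_combination -hw2⟩
        · show p ∣ r₂ 0 * r₁ 2 + -(r₁ 0) * r₂ 2; exact ⟨w1, by linear_combination hw1⟩
        · show p ∣ r₂ 1 * r₁ 0 + -(r₁ 1) * r₂ 0; exact ⟨w2, by linear_combination hw2⟩
        · show p ∣ r₂ 1 * r₁ 1 + -(r₁ 1) * r₂ 1; exact ⟨0, by ring⟩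
        · show p ∣ r₂ 1 * r₁ 2 + -(r₁ 1) * r₂ 2; exact ⟨-w0, by linear_combination -hw0⟩
        · show p ∣ r₂ 2 * r₁ 0 + -(r₁ 2) * r₂ 0; exact ⟨-w1, by linear_combination -hw1⟩
        · show p ∣ r₂ 2 * r₁ 1 + -(r₁ 2) * r₂ 1; exact ⟨w0, by linear_combination hw0⟩
        · show p ∣ r₂ 2 * r₁ 2 + -(r₁ 2) * r₂ 2; exact ⟨0, by ring⟩
    have := (hind 1 0 (by intro i; simpa using key i)).1
    exact hp.not_dvd_one this
  push_neg at hcr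
  by_cases hd0 : p ∣ r₁ 1 * r₂ 2 - r₁ 2 * r₂ 1
  · by_cases hd1 : p ∣ r₁ 2 * r₂ 0 - r₁ 0 * r₂ 2
    · -- third cross coordinate not divisible
      have hd2 := hcr hd0 hd1
      refine L1core G hG p hp r₁ r₂ ![0,0,1] h1 h2 ?_
      have : (Matrix.of fun i j => (![r₁, r₂, ![0,0,1]] : Fin 3 → Fin 3 → ℤ) j i).det
          = r₁ 0 * r₂ 1 - r₁ 1 * r₂ 0 := by
        simp [Matrix.det_fin_three]; ring
      rw [this]; exact hd2
    · refine L1core G hG p hp r₁ r₂ ![0,1,0] h1 h2 ?_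
      have : (Matrix.of fun i j => (![r₁, r₂, ![0,1,0]] : Fin 3 → Fin 3 → ℤ) j i).det
          = r₁ 2 * r₂ 0 - r₁ 0 * r₂ 2 := by
        simp [Matrix.det_fin_three]; ring
      rw [this]; exact hd1
  · refine L1core G hG p hp r₁ r₂ ![1,0,0] h1 h2 ?_
    have : (Matrix.of fun i j => (![r₁, r₂, ![1,0,0]] : Fin 3 → Fin 3 → ℤ) j i).det
        = r₁ 1 * r₂ 2 - r₁ 2 * r₂ 1 := by
      simp [Matrix.det_fin_three]; ring
    rw [this]; exact hd0

lemma L2 (G : Matrix (Fin 3) (Fin 3) ℤ) (hG : G.IsSymm) (u : Fin 3 → ℤ)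
    (h2 : ∀ x, (2:ℤ) ∣ gram G u x) (h4 : (4:ℤ) ∣ gram G u u)
    (hv : ∃ i, ¬ (2:ℤ) ∣ u i) : (4:ℤ) ∣ G.det := by
  obtain ⟨i₀, hi⟩ := hv
  fin_cases i₀
  · refine L2core G hG u ![0,1,0] ![0,0,1] h2 h4 ?_
    have : (Matrix.of fun i j => (![u, ![0,1,0], ![0,0,1]] : Fin 3 → Fin 3 → ℤ) j i).det
        = u 0 := by simp [Matrix.det_fin_three, Matrix.vecHead, Matrix.vecTail]
    rw [this]; exact hi
  · refine L2core G hG u ![1,0,0] ![0,0,1] h2 h4 ?_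
    have : (Matrix.of fun i j => (![u, ![1,0,0], ![0,0,1]] : Fin 3 → Fin 3 → ℤ) j i).det
        = -u 1 := by simp [Matrix.det_fin_three, Matrix.vecHead, Matrix.vecTail]
    rw [this, dvd_neg]; exact hi
  · refine L2core G hG u ![1,0,0] ![0,1,0] h2 h4 ?_
    have : (Matrix.of fun i j => (![u, ![1,0,0], ![0,1,0]] : Fin 3 → Fin 3 → ℤ) j i).det
        = u 2 := by simp [Matrix.det_fin_three, Matrix.vecHead, Matrix.vecTail]
    rw [this]; exact hi

lemma prim_not_all_dvd (p : ℤ) (hp : Prime p) (r : Fin 3 → ℤ)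
    (hprim : IsPrimitiveVec r) (h : ∀ i, p ∣ r i) : False := by
  have : r = p • (fun i => r i / p) := by
    funext i
    simp only [Pi.smul_apply, smul_eq_mul]
    exact (Int.mul_ediv_cancel' (h i)).symm
  exact hp.not_unit (hprim.2 p _ this)

lemma exists_inv_mod (p : ℕ) (hp : p.Prime) (m : ℤ) (hm : ¬ (p:ℤ) ∣ m) :
    ∃ m' : ℤ, (p:ℤ) ∣ m * m' - 1 := by
  haveI := Fact.mk hp
  have hm0 : (m : ZMod p) ≠ 0 := by
    rwa [Ne, ZMod.intCast_zmod_eq_zero_iff_dvd]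
  refine ⟨((m : ZMod p)⁻¹).val, ?_⟩
  rw [← ZMod.intCast_zmod_eq_zero_iff_dvd]
  push_cast
  rw [ZMod.natCast_val, ZMod.cast_id]
  simp [mul_inv_cancel₀ hm0]

lemma indep_of_no_ratio (p : ℕ) (hp : p.Prime) (r₁ r₂ : Fin 3 → ℤ)
    (hprim₁ : IsPrimitiveVec r₁)
    (hnr : ¬ ∃ ν : ℤ, ∀ i, (p:ℤ) ∣ r₂ i - ν * r₁ i) :
    ∀ l m : ℤ, (∀ i, (p:ℤ) ∣ l * r₁ i + m * r₂ i) → (p:ℤ) ∣ l ∧ (p:ℤ) ∣ m := by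
  have hpz : Prime (p:ℤ) := Nat.prime_iff_prime_int.mp hp
  intro l m h
  by_cases hm : (p:ℤ) ∣ m
  · refine ⟨?_, hm⟩
    by_cases hl : (p:ℤ) ∣ l
    · exact hl
    · exfalso
      apply prim_not_all_dvd _ hpz r₁ hprim₁
      intro i
      have h1 : (p:ℤ) ∣ l * r₁ i := by
        have := dvd_sub (h i) (hm.mul_right (r₂ i))
        simpa using this
      exact (hpz.dvd_or_dvd h1).resolve_left hl
  · exfalso
    obtain ⟨m', hm'⟩ := exists_inv_mod p hp m hm
    refine hnr ⟨-(m' * l), fun i => ?_⟩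
    have h1 : (p:ℤ) ∣ m' * (l * r₁ i + m * r₂ i) - (m * m' - 1) * r₂ i :=
      dvd_sub ((h i).mul_left m') (hm'.mul_right (r₂ i))
    have : r₂ i - -(m' * l) * r₁ i
        = m' * (l * r₁ i + m * r₂ i) - (m * m' - 1) * r₂ i := by ring
    rwa [this]

lemma nat_eq_two_pow (n : ℕ) (hn : n ≠ 0)
    (h : ∀ q : ℕ, q.Prime → q ≠ 2 → ¬ q ∣ n) : n = 2 ^ n.factorization 2 := by
  have key := Nat.ordProj_mul_ordCompl_eq_self n 2
  have hm : n / 2 ^ n.factorization 2 = 1 := by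
    by_contra hne
    obtain ⟨q, hq, hqd⟩ := Nat.exists_prime_and_dvd hne
    have hq2 : q ≠ 2 := by
      rintro rfl
      exact Nat.not_dvd_ordCompl Nat.prime_two hn hqd
    exact h q hq hq2 (hqd.trans (Nat.ordCompl_dvd n 2))
  rw [hm, mul_one] at key
  exact key.symm

lemma int_pow_dvd_iff (p n : ℕ) (m : ℤ) : (p:ℤ)^n ∣ m ↔ p^n ∣ m.natAbs := by
  rw [show ((p:ℤ)^n) = ((p^n : ℕ) : ℤ) by push_cast; ring]
  exact Int.natCast_dvd

lemma aux_odd (G : Matrix (Fin 3) (Fin 3) ℤ) (hG : G.IsSymm) (hsf : Squarefree G.det)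
    (r₁ r₂ : Fin 3 → ℤ) (hr₁ : IsRootOf G r₁) (hr₂ : IsRootOf G r₂)
    (hprim₁ : IsPrimitiveVec r₁) (hprim₂ : IsPrimitiveVec r₂)
    (hab : 2 * (gram G r₁ r₂)^2 = gram G r₁ r₁ * gram G r₂ r₂)
    (p : ℕ) (hp : p.Prime) (hp2 : p ≠ 2) (hdvd : (p:ℤ) ∣ gram G r₁ r₁) : False := by
  set a := gram G r₁ r₁ with ha_def
  set b := gram G r₂ r₂ with hb_def
  set c := gram G r₁ r₂ with hc_def
  have ha : a < 0 := hr₁.1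
  have hb : b < 0 := hr₂.1
  have haz : a ≠ 0 := ha.ne
  have hbz : b ≠ 0 := hb.ne
  have hpz : Prime (p:ℤ) := Nat.prime_iff_prime_int.mp hp
  have hp0 : (p:ℤ) ≠ 0 := by exact_mod_cast hp.ne_zero
  have hpn2 : ¬ (p:ℤ) ∣ 2 := by
    intro h
    have : p ∣ 2 := by exact_mod_cast h
    exact hp2 ((Nat.prime_dvd_prime_iff_eq hp Nat.prime_two).mp this)
  set A := a.natAbs with hA_def
  set B := b.natAbs with hB_def
  set C := c.natAbs with hC_def
  have hA0 : A ≠ 0 := Int.natAbs_ne_zero.mpr haz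
  have hB0 : B ≠ 0 := Int.natAbs_ne_zero.mpr hbz
  have hNat : 2 * C^2 = A * B := by
    have := congrArg Int.natAbs hab
    simpa [Int.natAbs_mul, Int.natAbs_pow] using this
  have hC0 : C ≠ 0 := by
    intro h
    rw [h] at hNat
    simp at hNat
    rcases hNat with h' | h' <;> [exact hA0 h'; exact hB0 h']
  have h2C0 : 2 * C ≠ 0 := by positivity
  have hpA : p ∣ A := by
    have := Int.natAbs_dvd_natAbs.mpr hdvd
    simpa using this
  set e := A.factorization p with he_def
  have he : 0 < e := hp.factorization_pos_of_dvd hA0 hpA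
  have hadvd : a ∣ 2 * c := hr₁.2 r₂
  have hbdvd : b ∣ 2 * c := by
    have := hr₂.2 r₁
    rwa [gram_comm G hG r₂ r₁] at this
  have hA2C : A ∣ 2 * C := by
    have := Int.natAbs_dvd_natAbs.mpr hadvd
    simpa [Int.natAbs_mul] using this
  have hB2C : B ∣ 2 * C := by
    have := Int.natAbs_dvd_natAbs.mpr hbdvd
    simpa [Int.natAbs_mul] using this
  have hp2fac : (2:ℕ).factorization p = 0 :=
    Nat.factorization_eq_zero_of_not_dvd (fun h => hp2 ((Nat.prime_dvd_prime_iff_eq hp Nat.prime_two).mp h))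
  set k := C.factorization p with hk_def
  set j := B.factorization p with hj_def
  have hsum : 2 * k = e + j := by
    have := congrArg (fun n => n.factorization p) hNat
    simp only [Nat.factorization_mul (two_ne_zero) (pow_ne_zero 2 hC0),
      Nat.factorization_mul hA0 hB0, Nat.factorization_pow, Finsupp.add_apply,
      Finsupp.smul_apply, smul_eq_mul, hp2fac] at this
    omega
  have h2Cfac : (2 * C).factorization p = k := by
    rw [Nat.factorization_mul (two_ne_zero) hC0]
    simp [hp2fac]
    rfl
  have hek : e ≤ k := by
    have h' := (Nat.factorization_le_iff_dvd hA0 h2C0).mpr hA2C p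
    rwa [h2Cfac] at h'
  have hjk : j ≤ k := by
    have h' := (Nat.factorization_le_iff_dvd hB0 h2C0).mpr hB2C p
    rwa [h2Cfac] at h'
  have hke : k = e := by omega
  have hje : j = e := by omega
  -- exact power decompositions
  have hpea : (p:ℤ)^e ∣ a := (int_pow_dvd_iff p e a).mpr (Nat.ordProj_dvd A p)
  have hpeb : (p:ℤ)^e ∣ b := (int_pow_dvd_iff p e b).mpr (hje ▸ Nat.ordProj_dvd B p)
  have hpec : (p:ℤ)^e ∣ c := (int_pow_dvd_iff p e c).mpr (hke ▸ Nat.ordProj_dvd C p)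
  -- divisibility of all gram values
  have hga : ∀ x, (p:ℤ)^e ∣ gram G r₁ x := fun x =>
    hpz.pow_dvd_of_dvd_mul_left e hpn2 (hpea.trans (hr₁.2 x))
  have hgb : ∀ x, (p:ℤ)^e ∣ gram G r₂ x := fun x =>
    hpz.pow_dvd_of_dvd_mul_left e hpn2 (hpeb.trans (hr₂.2 x))
  obtain ⟨a₁, ha₁⟩ := hpea
  obtain ⟨b₁, hb₁⟩ := hpeb
  obtain ⟨c₁, hc₁⟩ := hpec
  have hpa₁ : ¬ (p:ℤ) ∣ a₁ := by
    intro hd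
    have : (p:ℤ)^(e+1) ∣ a := by
      rw [ha₁, pow_succ]
      exact mul_dvd_mul_left _ hd
    exact Nat.pow_succ_factorization_not_dvd hA0 hp ((int_pow_dvd_iff p (e+1) a).mp this)
  have hpb₁ : ¬ (p:ℤ) ∣ b₁ := by
    intro hd
    have : (p:ℤ)^(e+1) ∣ b := by
      rw [hb₁, pow_succ]
      exact mul_dvd_mul_left _ hd
    have := (int_pow_dvd_iff p (e+1) b).mp this
    rw [← hB_def, ← hje] at this
    exact Nat.pow_succ_factorization_not_dvd hB0 hp this
  have hpc₁ : ¬ (p:ℤ) ∣ c₁ := by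
    intro hd
    have : (p:ℤ)^(e+1) ∣ c := by
      rw [hc₁, pow_succ]
      exact mul_dvd_mul_left _ hd
    have := (int_pow_dvd_iff p (e+1) c).mp this
    rw [← hC_def, ← hke] at this
    exact Nat.pow_succ_factorization_not_dvd hC0 hp this
  by_cases hdep : ∃ ν : ℤ, ∀ i, (p:ℤ) ∣ r₂ i - ν * r₁ i
  · obtain ⟨ν, hν⟩ := hdep
    set z : Fin 3 → ℤ := fun i => (r₂ i - ν * r₁ i) / p with hz_def
    have hz : ∀ i, r₂ i = ν * r₁ i + (p:ℤ) * z i := by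
      intro i
      have h' := Int.mul_ediv_cancel' (hν i)
      simp only [hz_def]
      linarith [h']
    have hr₂eq : r₂ = fun i => ν * r₁ i + (p:ℤ) * z i := funext hz
    have hc_eq : c = ν * a + (p:ℤ) * gram G r₁ z := by
      have h' := gram_lin G r₁ r₁ z ν (p:ℤ)
      rw [← hr₂eq] at h'
      rw [hc_def, h', ← ha_def]
    have hb_eq : b = ν * c + (p:ℤ) * gram G r₂ z := by
      have h' := gram_lin G r₂ r₁ z ν (p:ℤ)
      rw [← hr₂eq, gram_comm G hG r₂ r₁] at h'
      rw [hb_def, h', ← hc_def]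
    have h1 : (p:ℤ)^(e+1) ∣ c - ν * a := by
      obtain ⟨w, hw⟩ := hga z
      exact ⟨w, by rw [hc_eq, hw]; ring⟩
    have h2 : (p:ℤ)^(e+1) ∣ b - ν * c := by
      obtain ⟨w, hw⟩ := hgb z
      exact ⟨w, by rw [hb_eq, hw]; ring⟩
    have hpe0 : ((p:ℤ)^e) ≠ 0 := pow_ne_zero e hp0
    obtain ⟨t1, ht1⟩ := h1
    obtain ⟨t2, ht2⟩ := h2
    have hcd1 : (p:ℤ) ∣ c₁ - ν * a₁ := by
      refine ⟨t1, mul_left_cancel₀ hpe0 ?_⟩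
      rw [ha₁, hc₁] at ht1
      linear_combination ht1
    have hcd2 : (p:ℤ) ∣ b₁ - ν * c₁ := by
      refine ⟨t2, mul_left_cancel₀ hpe0 ?_⟩
      rw [hb₁, hc₁] at ht2
      linear_combination ht2
    have h3 : 2 * c₁^2 = a₁ * b₁ := by
      have h' := hab
      rw [ha₁, hb₁, hc₁] at h'
      have := mul_left_cancel₀ (pow_ne_zero 2 hpe0) (show ((p:ℤ)^e)^2 * (2*c₁^2) = ((p:ℤ)^e)^2 * (a₁*b₁) from by linear_combination h')
      exact this
    haveI := Fact.mk hp
    have e1 : ((c₁ : ZMod p)) = (ν : ZMod p) * (a₁ : ZMod p) := by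
      have := (ZMod.intCast_zmod_eq_zero_iff_dvd _ p).mpr hcd1
      push_cast at this
      linear_combination this
    have e2 : ((b₁ : ZMod p)) = (ν : ZMod p) * (c₁ : ZMod p) := by
      have := (ZMod.intCast_zmod_eq_zero_iff_dvd _ p).mpr hcd2
      push_cast at this
      linear_combination this
    have e3 : (2 : ZMod p) * (c₁ : ZMod p)^2 = (a₁ : ZMod p) * (b₁ : ZMod p) := by
      have := congrArg (fun m : ℤ => (m : ZMod p)) h3
      push_cast at this
      exact this
    have h0 : ((ν : ZMod p) * (a₁ : ZMod p))^2 = 0 := by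
      rw [e1] at e2 e3
      rw [e2] at e3
      linear_combination e3
    have hν0 : ((ν : ZMod p)) * (a₁ : ZMod p) = 0 := by
      exact pow_eq_zero_iff (n := 2) (by norm_num) |>.mp h0
    have ha₁0 : ((a₁ : ZMod p)) ≠ 0 := by
      rw [Ne, ZMod.intCast_zmod_eq_zero_iff_dvd]
      exact hpa₁
    have hνz : ((ν : ZMod p)) = 0 := by
      rcases mul_eq_zero.mp hν0 with h' | h'
      · exact h'
      · exact absurd h' ha₁0
    have hpν : (p:ℤ) ∣ ν := (ZMod.intCast_zmod_eq_zero_iff_dvd _ p).mp hνz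
    refine prim_not_all_dvd (p:ℤ) hpz r₂ hprim₂ fun i => ?_
    rw [hz i]
    exact dvd_add (hpν.mul_right _) ⟨z i, rfl⟩
  · have hind := indep_of_no_ratio p hp r₁ r₂ hprim₁ hdep
    have hpe : (p:ℤ) ∣ (p:ℤ)^e := dvd_pow_self _ he.ne'
    have hdet := L1 G hG (p:ℤ) hpz r₁ r₂ (fun x => hpe.trans (hga x)) (fun x => hpe.trans (hgb x)) hind
    have : IsUnit ((p:ℤ)) := hsf (p:ℤ) (by rw [← sq]; exact hdet)
    exact hpz.not_unit this

lemma aux_main (G : Matrix (Fin 3) (Fin 3) ℤ) (hG : G.IsSymm) (hsf : Squarefree G.det)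
    (r₁ r₂ : Fin 3 → ℤ) (hr₁ : IsRootOf G r₁) (hr₂ : IsRootOf G r₂)
    (hprim₁ : IsPrimitiveVec r₁) (hprim₂ : IsPrimitiveVec r₂)
    (hab : 2 * (gram G r₁ r₂)^2 = gram G r₁ r₁ * gram G r₂ r₂)
    (hle : (gram G r₁ r₁).natAbs ≤ (gram G r₂ r₂).natAbs) :
    gram G r₁ r₁ = -1 ∧ gram G r₂ r₂ = -2 ∧
      (gram G r₁ r₂ = 1 ∨ gram G r₁ r₂ = -1) := by
  set a := gram G r₁ r₁ with ha_def
  set b := gram G r₂ r₂ with hb_def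
  set c := gram G r₁ r₂ with hc_def
  have ha : a < 0 := hr₁.1
  have hb : b < 0 := hr₂.1
  have haz : a ≠ 0 := ha.ne
  have hbz : b ≠ 0 := hb.ne
  set A := a.natAbs with hA_def
  set B := b.natAbs with hB_def
  set C := c.natAbs with hC_def
  have hA0 : A ≠ 0 := Int.natAbs_ne_zero.mpr haz
  have hB0 : B ≠ 0 := Int.natAbs_ne_zero.mpr hbz
  have hNat : 2 * C^2 = A * B := by
    have := congrArg Int.natAbs hab
    simpa [Int.natAbs_mul, Int.natAbs_pow] using this
  have hC0 : C ≠ 0 := by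
    intro h
    rw [h] at hNat
    simp at hNat
    rcases hNat with h' | h' <;> [exact hA0 h'; exact hB0 h']
  have h2C0 : 2 * C ≠ 0 := by positivity
  have hadvd : a ∣ 2 * c := hr₁.2 r₂
  have hbdvd : b ∣ 2 * c := by
    have := hr₂.2 r₁
    rwa [gram_comm G hG r₂ r₁] at this
  have hA2C : A ∣ 2 * C := by
    have := Int.natAbs_dvd_natAbs.mpr hadvd
    simpa [Int.natAbs_mul] using this
  have hB2C : B ∣ 2 * C := by
    have := Int.natAbs_dvd_natAbs.mpr hbdvd
    simpa [Int.natAbs_mul] using this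
  have hab' : 2 * (gram G r₂ r₁)^2 = gram G r₂ r₂ * gram G r₁ r₁ := by
    rw [gram_comm G hG r₂ r₁, ← hc_def, ← ha_def, ← hb_def]
    linarith [hab]
  have hAodd : ∀ q : ℕ, q.Prime → q ≠ 2 → ¬ q ∣ A := by
    intro q hq hq2 hqA
    exact aux_odd G hG hsf r₁ r₂ hr₁ hr₂ hprim₁ hprim₂ hab q hq hq2
      (Int.natCast_dvd.mpr hqA)
  have hBodd : ∀ q : ℕ, q.Prime → q ≠ 2 → ¬ q ∣ B := by
    intro q hq hq2 hqB
    exact aux_odd G hG hsf r₂ r₁ hr₂ hr₁ hprim₂ hprim₁ hab' q hq hq2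
      (Int.natCast_dvd.mpr hqB)
  have hCodd : ∀ q : ℕ, q.Prime → q ≠ 2 → ¬ q ∣ C := by
    intro q hq hq2 hqC
    have : q ∣ A * B := by
      rw [← hNat]
      exact Dvd.dvd.mul_left (hqC.trans (dvd_pow_self C two_ne_zero)) 2
    rcases hq.dvd_mul.mp this with h' | h'
    · exact hAodd q hq hq2 h'
    · exact hBodd q hq hq2 h'
  set i := A.factorization 2 with hi_def
  set j := B.factorization 2 with hj_def
  set k := C.factorization 2 with hk_def
  have hA2 : A = 2 ^ i := nat_eq_two_pow A hA0 hAodd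
  have hB2 : B = 2 ^ j := nat_eq_two_pow B hB0 hBodd
  have hC2 : C = 2 ^ k := nat_eq_two_pow C hC0 hCodd
  have hsum : i + j = 1 + 2 * k := by
    have h' := congrArg (fun n => n.factorization 2) hNat
    simp only [Nat.factorization_mul (two_ne_zero) (pow_ne_zero 2 hC0),
      Nat.factorization_mul hA0 hB0, Nat.factorization_pow, Finsupp.add_apply,
      Finsupp.smul_apply, smul_eq_mul, Nat.Prime.factorization_self Nat.prime_two] at h'
    omega
  have hik : i ≤ k + 1 := by
    rw [hA2, hC2, show 2 * 2^k = 2^(k+1) from by ring] at hA2C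
    exact (Nat.pow_dvd_pow_iff_le_right (by norm_num)).mp hA2C
  have hjk : j ≤ k + 1 := by
    rw [hB2, hC2, show 2 * 2^k = 2^(k+1) from by ring] at hB2C
    exact (Nat.pow_dvd_pow_iff_le_right (by norm_num)).mp hB2C
  have hij : i ≤ j := by
    rw [hA2, hB2] at hle
    exact (Nat.pow_le_pow_iff_right (by norm_num)).mp hle
  have hil : i = k ∧ j = k + 1 := by omega
  rcases Nat.eq_zero_or_pos k with hk0 | hkpos
  · -- k = 0 : A = 1, B = 2, C = 1
    have hA1 : a.natAbs = 1 := by rw [← hA_def, hA2, hil.1, hk0]; norm_num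
    have hB1 : b.natAbs = 2 := by rw [← hB_def, hB2, hil.2, hk0]; norm_num
    have hC1 : c.natAbs = 1 := by rw [← hC_def, hC2, hk0]; norm_num
    refine ⟨by omega, by omega, by omega⟩
  · -- k ≥ 1 : contradiction via L2
    exfalso
    have hBk : B = 2 ^ (k+1) := by rw [hB2, hil.2]
    have hbint : (2:ℤ)^(k+1) ∣ b := (int_pow_dvd_iff 2 (k+1) b).mpr (by rw [← hB_def, hBk])
    have h2g : ∀ x, (2:ℤ) ∣ gram G r₂ x := by
      intro x
      have h' : (2:ℤ)^(k+1) ∣ 2 * gram G r₂ x := hbint.trans (hr₂.2 x)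
      obtain ⟨w, hw⟩ := h'
      have hg : gram G r₂ x = 2^k * w := by
        have : (2:ℤ) * gram G r₂ x = 2 * (2^k * w) := by rw [hw]; ring
        exact mul_left_cancel₀ two_ne_zero this
      rw [hg]
      exact Dvd.dvd.mul_right (dvd_pow_self 2 hkpos.ne') w
    have h4 : (4:ℤ) ∣ gram G r₂ r₂ := by
      rw [← hb_def]
      refine dvd_trans ?_ hbint
      have : (4:ℤ) = 2^2 := by norm_num
      rw [this]
      exact pow_dvd_pow 2 (by omega)
    have hv : ∃ t, ¬ (2:ℤ) ∣ r₂ t := by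
      by_contra hcon
      push_neg at hcon
      exact prim_not_all_dvd 2 Int.prime_two r₂ hprim₂ hcon
    have hdet4 := L2 G hG r₂ h2g h4 hv
    have : IsUnit (2:ℤ) := hsf 2 (by norm_num at hdet4 ⊢; exact hdet4)
    rw [Int.isUnit_iff] at this
    omega

/-- If `r₁, r₂` are primitive roots of a hyperbolic lattice of rank 3 with square-free
determinant and `4(r₁,r₂)²/(r₁² r₂²) = 2`, then, up to exchanging `r₁` and `r₂` and
replacing `r₁` by `−r₁`, one has `r₁² = −1`, `r₂² = −2` and `(r₁, r₂) = 1`. -/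
theorem roots_with_ratio_two (G : Matrix (Fin 3) (Fin 3) ℤ)
    (hhyp : IsHyperbolicRank3 G)
    (hsf : Squarefree G.det)
    (r₁ r₂ : Fin 3 → ℤ)
    (hr₁ : IsRootOf G r₁) (hr₂ : IsRootOf G r₂)
    (hprim₁ : IsPrimitiveVec r₁) (hprim₂ : IsPrimitiveVec r₂)
    (hratio : 4 * (gram G r₁ r₂) ^ 2 = 2 * (gram G r₁ r₁ * gram G r₂ r₂)) :
    ((gram G r₁ r₁ = -1 ∧ gram G r₂ r₂ = -2) ∨
      (gram G r₁ r₁ = -2 ∧ gram G r₂ r₂ = -1)) ∧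
    (gram G r₁ r₂ = 1 ∨ gram G r₁ r₂ = -1) := by
  have hG : G.IsSymm := hhyp.1
  have hab : 2 * (gram G r₁ r₂)^2 = gram G r₁ r₁ * gram G r₂ r₂ := by linarith
  rcases le_total (gram G r₁ r₁).natAbs (gram G r₂ r₂).natAbs with hle | hle
  · obtain ⟨h1, h2, h3⟩ := aux_main G hG hsf r₁ r₂ hr₁ hr₂ hprim₁ hprim₂ hab hle
    exact ⟨Or.inl ⟨h1, h2⟩, h3⟩
  · have hab' : 2 * (gram G r₂ r₁)^2 = gram G r₂ r₂ * gram G r₁ r₁ := by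
      rw [gram_comm G hG r₂ r₁]
      linarith
    obtain ⟨h1, h2, h3⟩ := aux_main G hG hsf r₂ r₁ hr₂ hr₁ hprim₂ hprim₁ hab' hle
    rw [gram_comm G hG r₂ r₁] at h3
    exact ⟨Or.inr ⟨h2, h1⟩, h3⟩
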